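/- Let V : [0,∞) → [0,∞) and ζ : [0,∞) → [0,∞) be continuously differentiable with ζ′(t) ≥ 0 for all t ≥ 0; let β : [0,∞) → [β̲, β̄] be a function whose values lie in an interval [β̲, β̄] with β̲·β̄ > 0; let ħ be a BL-type Nussbaum function with constant L > max{β̲/β̄, β̄/β̲}; let k > 0, σ₁ > 0, θ ≥ 0 be constants; let ν : [0,∞) → [0,∞) be integrable with ∫₀^∞ ν(τ)dτ ≤ ν̄ < ∞; and let s : [0,∞) → ℝ^m be continuous. If V′(t) ≤ −k‖s(t)‖² + (1/σ₁)(β(t)·ħ(ζ(t)) + 1)·ζ′(t) + θ·ν(t) for all t ≥ 0, then V and ζ are bounded on [0,∞) and ∫₀^∞ ‖s(τ)‖² dτ < ∞. -/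

import Mathlib

open Filter MeasureTheory

/-- The positive part `ħ⁺(ζ) = max {0, ħ(ζ)}`. -/
noncomputable def nussPos (h : ℝ → ℝ) (ζ : ℝ) : ℝ := max 0 (h ζ)

/-- The negative part `ħ⁻(ζ) = max {0, −ħ(ζ)}`. -/
noncomputable def nussNeg (h : ℝ → ℝ) (ζ : ℝ) : ℝ := max 0 (-h ζ)

/-- A continuously differentiable function `ħ : [0,∞) → ℝ` is a *BL-type Nussbaum
function* with constant `L > 1` (limsups in the extended reals). -/
def IsBLNussbaum (h : ℝ → ℝ) (L : ℝ) : Prop :=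
  1 < L ∧ ContDiff ℝ 1 h ∧
  Tendsto (fun ζ => (∫ τ in (0:ℝ)..ζ, nussPos h τ) / ζ) atTop atTop ∧
  Tendsto (fun ζ => (∫ τ in (0:ℝ)..ζ, nussNeg h τ) / ζ) atTop atTop ∧
  (L : EReal) ≤ limsup (fun ζ =>
      (((∫ τ in (0:ℝ)..ζ, nussPos h τ) / (∫ τ in (0:ℝ)..ζ, nussNeg h τ) : ℝ) : EReal)) atTop ∧
  (L : EReal) ≤ limsup (fun ζ =>
      (((∫ τ in (0:ℝ)..ζ, nussNeg h τ) / (∫ τ in (0:ℝ)..ζ, nussPos h τ) : ℝ) : EReal)) atTop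

/-! Along the trajectory, `β ħ(ζ) + 1 ≤ Φ'(ζ)` for
`Φ(z) = β̄ ∫₀^z ħ⁺ - β̲ ∫₀^z ħ⁻ + z`, and `ζ' ≥ 0`, so integrating the differential inequality
gives `V(t) + k ∫₀^t ‖s‖² ≤ V(0) + (Φ(ζ(t)) - Φ(ζ(0)))/σ₁ + θ ν̄`. The left side is nonnegative,
so `Φ ∘ ζ` is bounded below. Since `L` exceeds both `β̲/β̄` and `β̄/β̲`, the BL-type Nussbaum
condition makes `Φ` dip below every level at arbitrarily large arguments; by the intermediate
value theorem an unbounded `ζ` would reach such an argument, so `ζ` is bounded. Then `ζ` ranges in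
a compact interval, `Φ ∘ ζ` is bounded above, and the energy estimate bounds `V` and
`∫₀^t ‖s‖²` uniformly in `t`. -/

open Set

lemma frequently_mul_sub_mul_add_lt {P N : ℝ → ℝ} {a b L : ℝ} (ha : 0 < a) (hba : b / a < L)
    (hP : Tendsto (fun z => P z / z) atTop atTop)
    (hNP : (L : EReal) ≤ limsup (fun z => ((N z / P z : ℝ) : EReal)) atTop) (D : ℝ) :
    ∃ᶠ z in atTop, b * P z - a * N z + z < D := by
  obtain ⟨L', hbaL', hL'L⟩ := exists_between hba
  set c := a * L' - b
  have hc : 0 < c := by rw [div_lt_iff₀ ha] at hbaL'; linarith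
  have hfreq : ∃ᶠ z in atTop, L' < N z / P z := by
    have hlt : ((L' : ℝ) : EReal) < limsup (fun z => ((N z / P z : ℝ) : EReal)) atTop :=
      (EReal.coe_lt_coe_iff.2 hL'L).trans_le hNP
    exact (frequently_lt_of_lt_limsup (by isBoundedDefault) hlt).mono
      fun z hz => EReal.coe_lt_coe_iff.1 hz
  have hev : ∀ᶠ z in atTop, 2 / c ≤ P z / z ∧ 0 < z ∧ -D < z :=
    (hP.eventually_ge_atTop _).and ((eventually_gt_atTop 0).and (eventually_gt_atTop _))
  -- at such `z`, `b P - a N + z < z - c P ≤ -z < D`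
  refine (hfreq.and_eventually hev).mono fun z ⟨hNz, hPz, hz, hDz⟩ => ?_
  rw [le_div_iff₀ hz, div_mul_eq_mul_div, div_le_iff₀' hc] at hPz
  have hPpos : 0 < P z := by nlinarith
  rw [lt_div_iff₀ hPpos] at hNz
  nlinarith

lemma sub_le_setIntegral_Ici_of_deriv_le {g g' φ : ℝ → ℝ} {a t : ℝ}
    (hg : ∀ x, HasDerivAt g (g' x) x) (hφ : IntegrableOn φ (Ici a))
    (hφ_nonneg : ∀ x, a ≤ x → 0 ≤ φ x) (hle : ∀ x, a ≤ x → g' x ≤ φ x) (ht : a ≤ t) :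
    g t - g a ≤ ∫ x in Ici a, φ x := by
  calc g t - g a ≤ ∫ x in a..t, φ x :=
        intervalIntegral.sub_le_integral_of_hasDeriv_right_of_le ht
          (HasDerivAt.continuousOn fun x _ => hg x) (fun x _ => (hg x).hasDerivWithinAt)
          (hφ.mono_set Icc_subset_Ici_self) fun x hx => hle x hx.1.le
    _ ≤ ∫ x in Ici a, φ x := by
        rw [intervalIntegral.integral_of_le ht]
        exact setIntegral_mono_set hφ
          ((ae_restrict_iff' measurableSet_Ici).2 (ae_of_all _ hφ_nonneg))
          (Ioc_subset_Ioi_self.trans Ioi_subset_Ici_self).eventuallyLE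

lemma integrableOn_Ici_of_intervalIntegral_le {q : ℝ → ℝ} {a C : ℝ} (hq : Continuous q)
    (hq_nonneg : ∀ x, a ≤ x → 0 ≤ q x) (hC : ∀ t, a ≤ t → ∫ x in a..t, q x ≤ C) :
    IntegrableOn q (Ici a) := by
  rw [integrableOn_Ici_iff_integrableOn_Ioi]
  refine integrableOn_Ioi_of_intervalIntegral_norm_bounded C a (fun _ => hq.integrableOn_Ioc)
    tendsto_id ((eventually_ge_atTop a).mono fun t ht => ?_)
  calc ∫ x in a..t, ‖q x‖ = ∫ x in a..t, q x :=
        intervalIntegral.integral_congr fun x hx =>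
          Real.norm_of_nonneg (hq_nonneg x (by rw [uIcc_of_le ht] at hx; exact hx.1))
    _ ≤ C := hC t ht

lemma exists_le_of_frequently_lt_of_le_comp {ζ Φ : ℝ → ℝ} {D : ℝ} (hζ : Continuous ζ)
    (hΦ : ∃ᶠ z in atTop, Φ z < D) (hD : ∀ t, 0 ≤ t → D ≤ Φ (ζ t)) :
    ∃ Z, ∀ t, 0 ≤ t → ζ t ≤ Z := by
  by_contra! hunbdd
  obtain ⟨z, hΦz, hz⟩ := (hΦ.and_eventually (eventually_ge_atTop (ζ 0))).exists
  obtain ⟨T, hT, hzT⟩ := hunbdd z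
  obtain ⟨t, ht, rfl⟩ := intermediate_value_Icc hT hζ.continuousOn ⟨hz, hzT.le⟩
  exact (hD t ht.1).not_gt hΦz

lemma continuous_nussPos {h : ℝ → ℝ} (hh : Continuous h) : Continuous (nussPos h) :=
  continuous_const.max hh

lemma continuous_nussNeg {h : ℝ → ℝ} (hh : Continuous h) : Continuous (nussNeg h) :=
  continuous_const.max hh.neg

lemma mul_le_nussPos_sub_nussNeg (h : ℝ → ℝ) {b lo hi : ℝ} (hb : b ∈ Icc lo hi) (x : ℝ) :
    b * h x ≤ hi * nussPos h x - lo * nussNeg h x := by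
  unfold nussPos nussNeg
  rcases le_total 0 (h x) with hx | hx
  · rw [max_eq_right hx, max_eq_left (neg_nonpos.2 hx)]
    nlinarith [hb.2]
  · rw [max_eq_left hx, max_eq_right (neg_nonneg.2 hx)]
    nlinarith [hb.1]

noncomputable def nussPotential (h : ℝ → ℝ) (lo hi z : ℝ) : ℝ :=
  hi * (∫ τ in (0:ℝ)..z, nussPos h τ) - lo * (∫ τ in (0:ℝ)..z, nussNeg h τ) + z

lemma hasDerivAt_nussPotential {h : ℝ → ℝ} (hh : Continuous h) (lo hi z : ℝ) :
    HasDerivAt (nussPotential h lo hi) (hi * nussPos h z - lo * nussNeg h z + 1) z :=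
  ((((continuous_nussPos hh).integral_hasStrictDerivAt 0 z).hasDerivAt.const_mul hi).sub
    (((continuous_nussNeg hh).integral_hasStrictDerivAt 0 z).hasDerivAt.const_mul lo)).add
    (hasDerivAt_id z)

lemma continuous_nussPotential {h : ℝ → ℝ} (hh : Continuous h) (lo hi : ℝ) :
    Continuous (nussPotential h lo hi) :=
  continuous_iff_continuousAt.2 fun z => (hasDerivAt_nussPotential hh lo hi z).continuousAt

lemma IsBLNussbaum.frequently_nussPotential_lt {h : ℝ → ℝ} {L lo hi : ℝ} (hN : IsBLNussbaum h L)
    (hprod : 0 < lo * hi) (hL : max (lo / hi) (hi / lo) < L) (D : ℝ) :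
    ∃ᶠ z in atTop, nussPotential h lo hi z < D := by
  obtain ⟨-, -, hP, hN, hPN, hNP⟩ := hN
  rcases mul_pos_iff.1 hprod with ⟨hlo, -⟩ | ⟨-, hhi⟩
  · exact frequently_mul_sub_mul_add_lt hlo ((le_max_right _ _).trans_lt hL) hP hNP D
  · have hba : -lo / -hi < L := by rw [neg_div_neg_eq]; exact (le_max_left _ _).trans_lt hL
    refine (frequently_mul_sub_mul_add_lt (neg_pos.2 hhi) hba hN hPN D).mono fun z hz => ?_
    rw [nussPotential]
    linarith

lemma add_mul_integral_sub_nussPotential_le {V ζ β h ν q : ℝ → ℝ} {lo hi k σ θ νbar t : ℝ}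
    (hV : Differentiable ℝ V) (hζ : Differentiable ℝ ζ) (hh : Continuous h) (hq : Continuous q)
    (hζ' : ∀ t, 0 ≤ t → 0 ≤ deriv ζ t) (hβ : ∀ t, 0 ≤ t → β t ∈ Icc lo hi)
    (hσ : 0 < σ) (hθ : 0 ≤ θ) (hν_nonneg : ∀ t, 0 ≤ t → 0 ≤ ν t) (hν : IntegrableOn ν (Ici 0))
    (hνbar : ∫ τ in Ici (0:ℝ), ν τ ≤ νbar)
    (hineq : ∀ t, 0 ≤ t →
      deriv V t ≤ -k * q t + (1 / σ) * (β t * h (ζ t) + 1) * deriv ζ t + θ * ν t)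
    (ht : 0 ≤ t) :
    V t + k * (∫ τ in (0:ℝ)..t, q τ) - nussPotential h lo hi (ζ t) / σ ≤
      V 0 - nussPotential h lo hi (ζ 0) / σ + θ * νbar := by
  have hW : ∀ τ, HasDerivAt
      (fun τ => V τ + k * (∫ x in (0:ℝ)..τ, q x) - nussPotential h lo hi (ζ τ) / σ)
      (deriv V τ + k * q τ -
        (hi * nussPos h (ζ τ) - lo * nussNeg h (ζ τ) + 1) * deriv ζ τ / σ) τ := fun τ =>
    ((hV τ).hasDerivAt.add ((hq.integral_hasStrictDerivAt 0 τ).hasDerivAt.const_mul k)).sub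
      (((hasDerivAt_nussPotential hh lo hi (ζ τ)).comp τ (hζ τ).hasDerivAt).div_const σ)
  have hW_le := sub_le_setIntegral_Ici_of_deriv_le hW (hν.const_mul θ)
    (fun τ hτ => mul_nonneg hθ (hν_nonneg τ hτ)) (fun τ hτ => ?_) ht
  · rw [integral_const_mul] at hW_le
    simp only [intervalIntegral.integral_same, mul_zero, add_zero] at hW_le
    linarith [mul_le_mul_of_nonneg_left hνbar hθ]
  · have hmaj : (β τ * h (ζ τ) + 1) * deriv ζ τ / σ ≤
        (hi * nussPos h (ζ τ) - lo * nussNeg h (ζ τ) + 1) * deriv ζ τ / σ := by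
      gcongr
      · exact hζ' τ hτ
      · exact mul_le_nussPos_sub_nussNeg h (hβ τ hτ) (ζ τ)
    have := hineq τ hτ
    rw [mul_assoc, one_div_mul_eq_div] at this
    linarith

/-- the stability-analysis step (25)–(26) of Theorem 1.
Let `V, ζ : [0,∞) → [0,∞)` be continuously differentiable with `ζ′ ≥ 0`; let
`β : [0,∞) → [β̲, β̄]` with `β̲·β̄ > 0`; let `ħ` be a BL-type Nussbaum function with
`L > max {β̲/β̄, β̄/β̲}`; let `k, σ₁ > 0`, `θ ≥ 0`; let `ν : [0,∞) → [0,∞)` be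
integrable with `∫₀^∞ ν ≤ ν̄ < ∞`; and let `s : [0,∞) → ℝ^m` be continuous.  If
`V′(t) ≤ −k‖s(t)‖² + (1/σ₁)(β(t)ħ(ζ(t)) + 1)ζ′(t) + θν(t)` for all `t ≥ 0`, then
`V` and `ζ` are bounded on `[0,∞)` and `∫₀^∞ ‖s(τ)‖² dτ < ∞`. -/
theorem bl_nussbaum_integral_lemma {m : ℕ}
    (V ζ β h ν : ℝ → ℝ) (βlo βhi L k σ₁ θ νbar : ℝ)
    (s : ℝ → EuclideanSpace ℝ (Fin m))
    (hV_smooth : ContDiff ℝ 1 V) (hζ_smooth : ContDiff ℝ 1 ζ)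
    (hV_nonneg : ∀ t, 0 ≤ t → 0 ≤ V t)
    (hζ_nonneg : ∀ t, 0 ≤ t → 0 ≤ ζ t)
    (hζ_mono : ∀ t, 0 ≤ t → 0 ≤ deriv ζ t)
    (hβ : ∀ t, 0 ≤ t → β t ∈ Set.Icc βlo βhi)
    (hβprod : 0 < βlo * βhi)
    (hL : max (βlo / βhi) (βhi / βlo) < L)
    (hNuss : IsBLNussbaum h L)
    (hk : 0 < k) (hσ₁ : 0 < σ₁) (hθ : 0 ≤ θ)
    (hν_nonneg : ∀ t, 0 ≤ t → 0 ≤ ν t)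
    (hν_int : IntegrableOn ν (Set.Ici 0))
    (hν_bar : ∫ τ in Set.Ici (0:ℝ), ν τ ≤ νbar)
    (hs_cont : Continuous s)
    (hineq : ∀ t, 0 ≤ t →
        deriv V t ≤ -k * ‖s t‖ ^ 2 + (1 / σ₁) * (β t * h (ζ t) + 1) * deriv ζ t + θ * ν t) :
    (∃ C : ℝ, ∀ t, 0 ≤ t → V t ≤ C) ∧ (∃ C : ℝ, ∀ t, 0 ≤ t → ζ t ≤ C) ∧
    IntegrableOn (fun τ => ‖s τ‖ ^ 2) (Set.Ici 0) := by
  have hh : Continuous h := hNuss.2.1.continuous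
  set Φ := nussPotential h βlo βhi
  set E := fun t => V t + k * ∫ τ in (0:ℝ)..t, ‖s τ‖ ^ 2
  have hE : ∀ t, 0 ≤ t → E t - Φ (ζ t) / σ₁ ≤ V 0 - Φ (ζ 0) / σ₁ + θ * νbar := fun t ht =>
    add_mul_integral_sub_nussPotential_le (hV_smooth.differentiable one_ne_zero)
      (hζ_smooth.differentiable one_ne_zero) hh (hs_cont.norm.pow 2) hζ_mono hβ hσ₁ hθ
      hν_nonneg hν_int hν_bar hineq ht
  have hS_nonneg : ∀ t, 0 ≤ t → 0 ≤ ∫ τ in (0:ℝ)..t, ‖s τ‖ ^ 2 := fun t ht =>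
    intervalIntegral.integral_nonneg ht fun _ _ => by positivity
  have hE_nonneg : ∀ t, 0 ≤ t → 0 ≤ E t := fun t ht =>
    add_nonneg (hV_nonneg t ht) (mul_nonneg hk.le (hS_nonneg t ht))
  obtain ⟨Z, hZ⟩ : ∃ Z, ∀ t, 0 ≤ t → ζ t ≤ Z := by
    refine exists_le_of_frequently_lt_of_le_comp hζ_smooth.continuous
      (hNuss.frequently_nussPotential_lt hβprod hL (Φ (ζ 0) - σ₁ * (V 0 + θ * νbar)))
      fun t ht => ?_
    have hdiff : (Φ (ζ 0) - Φ (ζ t)) / σ₁ ≤ V 0 + θ * νbar := by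
      linarith [hE t ht, hE_nonneg t ht, sub_div (Φ (ζ 0)) (Φ (ζ t)) σ₁]
    linarith [(div_le_iff₀' hσ₁).1 hdiff]
  obtain ⟨M, hM⟩ : BddAbove (Φ '' Icc 0 Z) :=
    isCompact_Icc.bddAbove_image (continuous_nussPotential hh βlo βhi).continuousOn
  set C := V 0 - Φ (ζ 0) / σ₁ + θ * νbar + M / σ₁
  have hE_le : ∀ t, 0 ≤ t → E t ≤ C := fun t ht => by
    have hΦM : Φ (ζ t) ≤ M := hM ⟨ζ t, ⟨hζ_nonneg t ht, hZ t ht⟩, rfl⟩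
    linarith [hE t ht, div_le_div_of_nonneg_right hΦM hσ₁.le]
  refine ⟨⟨C, fun t ht => ?_⟩, ⟨Z, hZ⟩, integrableOn_Ici_of_intervalIntegral_le (C := C / k)
    (hs_cont.norm.pow 2) (fun _ _ => by positivity) fun t ht => ?_⟩
  · linarith [hE_le t ht, mul_nonneg hk.le (hS_nonneg t ht)]
  · rw [le_div_iff₀' hk]
    linarith [hE_le t ht, hV_nonneg t ht]
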